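/- arXiv:2012.00589 — 7 statements merged into one kernel-verified Lean document; each statement's English description precedes it below -/
import Mathlib

section
/- Let n, f, ℓ be positive integers with n ≥ 1 and f ≤ ℓ, and let C be any set of n wheel positions with C ⊆ {1, 2, …, f}. Then there exists a track T ⊆ {1, 2, …, ℓ} such that for every offset k ∈ {0, 1, …, ℓ − f} we have (C + k) ∩ T ≠ ∅, and such that |T| ≤ ℓ·(1 + ln n)/n. -/
/-!
Greedy set cover, analysed as in Chvátal and Lovász. Regard each track position `x` as the
set of offsets `k` with `x - k ∈ C`. Every offset lies in exactly `n` of the `ℓ` positions, so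
weight `1/n` on each position is a fractional cover of total weight `ℓ/n`, and every set has at
most `n` elements. Repeatedly taking a position that supports the most offsets not yet
supported yields a cover of size at most `H(n) · ℓ/n ≤ (1 + ln n) · ℓ/n`.
-/

open Finset

theorem div_add_harmonic_le_harmonic_add {a b s : ℕ} (h : a + b ≤ s) :
    (a : ℚ) / s + harmonic b ≤ harmonic (b + a) := by
  have hterm : ∀ i ∈ range a, (1 : ℚ) / s ≤ (↑(b + i + 1))⁻¹ := by
    intro i hi
    rw [← one_div]
    exact one_div_le_one_div_of_le (by positivity) (by exact_mod_cast (by grind))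
  calc (a : ℚ) / s + harmonic b = harmonic b + #(range a) • ((1 : ℚ) / s) := by
        rw [card_range, nsmul_eq_mul]; ring
    _ ≤ harmonic b + ∑ i ∈ range a, (↑(b + i + 1))⁻¹ := by
        gcongr; exact card_nsmul_le_sum _ _ _ hterm
    _ = harmonic (b + a) := by rw [harmonic, harmonic, sum_range_add]

theorem harmonic_mono : Monotone harmonic := by
  intro m n hmn
  obtain ⟨a, rfl⟩ := Nat.exists_eq_add_of_le hmn
  have := div_add_harmonic_le_harmonic_add (a := a) (b := m) (s := m + a) (by omega)
  have : (0 : ℚ) ≤ a / (m + a : ℕ) := by positivity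
  linarith

section GreedyCover

variable {α β : Type*} (r : α → β → Prop) [DecidableRel r] (P : Finset α) (w : α → ℚ)

theorem sum_mul_card_filter_eq_sum_sum_filter (V : Finset β) :
    ∑ x ∈ P, w x * #{k ∈ V | r x k} = ∑ k ∈ V, ∑ x ∈ P with r x k, w x := by
  simp_rw [card_filter, Nat.cast_sum, mul_sum, sum_filter]
  rw [sum_comm]
  push_cast
  simp [mul_ite]

variable {r P w}

/-- Spread the cost `1` of the greedy choice `x₀` evenly over the `s` elements it covers: each
set `x` is then charged `a/s ≤ H(a + b) - H(b)` for its `a` newly covered elements. -/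
theorem one_add_sum_mul_harmonic_le {U : Finset β} (hw : ∀ x ∈ P, 0 ≤ w x)
    (hU : ∀ k ∈ U, 1 ≤ ∑ x ∈ P with r x k, w x) {x₀ : α}
    (hmax : ∀ x ∈ P, #{k ∈ U | r x k} ≤ #{k ∈ U | r x₀ k}) (hx₀ : {k ∈ U | r x₀ k}.Nonempty) :
    1 + ∑ x ∈ P, w x * harmonic #{k ∈ {k ∈ U | ¬ r x₀ k} | r x k}
      ≤ ∑ x ∈ P, w x * harmonic #{k ∈ U | r x k} := by
  set S := {k ∈ U | r x₀ k}
  set V := {k ∈ U | ¬ r x₀ k}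
  have hs : (0 : ℚ) < #S := by exact_mod_cast hx₀.card_pos
  have hsplit : ∀ x, #{k ∈ V | r x k} + #{k ∈ S | r x k} = #{k ∈ U | r x k} := by
    intro x
    rw [add_comm, ← card_filter_add_card_filter_not (s := {k ∈ U | r x k}) (r x₀)]
    simp only [S, V, filter_filter, and_comm]
  have hS : (#S : ℚ) ≤ ∑ x ∈ P, w x * #{k ∈ S | r x k} := by
    rw [sum_mul_card_filter_eq_sum_sum_filter]
    simpa using card_nsmul_le_sum S _ 1 (fun k hk => hU k (mem_filter.1 hk).1)
  calc 1 + ∑ x ∈ P, w x * harmonic #{k ∈ V | r x k}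
      ≤ ∑ x ∈ P, w x * (#{k ∈ S | r x k} / #S) +
          ∑ x ∈ P, w x * harmonic #{k ∈ V | r x k} := by
        gcongr
        simp_rw [← mul_div_assoc]
        rw [← sum_div, le_div_iff₀ hs, one_mul]
        exact hS
    _ ≤ ∑ x ∈ P, w x * harmonic #{k ∈ U | r x k} := by
        rw [← sum_add_distrib]
        refine sum_le_sum fun x hx => ?_
        rw [← mul_add, ← hsplit x]
        gcongr
        · exact hw x hx
        exact div_add_harmonic_le_harmonic_add (by rw [add_comm, hsplit x]; exact hmax x hx)

theorem exists_cover_card_le_sum_mul_harmonic (hw : ∀ x ∈ P, 0 ≤ w x) (U : Finset β)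
    (hU : ∀ k ∈ U, 1 ≤ ∑ x ∈ P with r x k, w x) :
    ∃ T ⊆ P, (∀ k ∈ U, ∃ x ∈ T, r x k) ∧
      (#T : ℚ) ≤ ∑ x ∈ P, w x * harmonic #{k ∈ U | r x k} := by
  classical
  induction U using Finset.strongInduction with
  | H U ih =>
  obtain rfl | ⟨k₀, hk₀⟩ := U.eq_empty_or_nonempty
  · exact ⟨∅, empty_subset P, by simp, by simp⟩
  obtain ⟨y, hyP, hyk₀⟩ : ∃ y ∈ P, r y k₀ := by
    by_contra! h
    exact absurd (hU k₀ hk₀) (by simp [filter_false_of_mem h])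
  obtain ⟨x₀, hx₀P, hmax⟩ := P.exists_max_image (fun x => #{k ∈ U | r x k}) ⟨y, hyP⟩
  have hx₀ : ({k ∈ U | r x₀ k}).Nonempty :=
    card_pos.1 <| (card_pos.2 ⟨k₀, mem_filter.2 ⟨hk₀, hyk₀⟩⟩).trans_le (hmax y hyP)
  have hssubset : {k ∈ U | ¬ r x₀ k} ⊂ U := filter_ssubset.2 <| by
    obtain ⟨k, hk⟩ := hx₀
    rw [mem_filter] at hk
    exact ⟨k, hk.1, not_not.2 hk.2⟩
  obtain ⟨T, hTP, hTcov, hTcard⟩ :=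
    ih _ hssubset (fun k hk => hU k (mem_filter.1 hk).1)
  refine ⟨insert x₀ T, insert_subset hx₀P hTP, fun k hk => ?_, ?_⟩
  · by_cases hk₀ : r x₀ k
    · exact ⟨x₀, mem_insert_self _ _, hk₀⟩
    · obtain ⟨x, hxT, hx⟩ := hTcov k (mem_filter.2 ⟨hk, hk₀⟩)
      exact ⟨x, mem_insert_of_mem hxT, hx⟩
  · calc (#(insert x₀ T) : ℚ) ≤ #T + 1 := mod_cast card_insert_le x₀ T
      _ ≤ _ := by linarith [one_add_sum_mul_harmonic_le hw hU hmax hx₀]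

theorem exists_cover_card_le_harmonic_mul_sum (hw : ∀ x ∈ P, 0 ≤ w x) (U : Finset β)
    (hU : ∀ k ∈ U, 1 ≤ ∑ x ∈ P with r x k, w x) {m : ℕ} (hm : ∀ x ∈ P, #{k ∈ U | r x k} ≤ m) :
    ∃ T ⊆ P, (∀ k ∈ U, ∃ x ∈ T, r x k) ∧ (#T : ℚ) ≤ harmonic m * ∑ x ∈ P, w x := by
  obtain ⟨T, hTP, hTcov, hTcard⟩ := exists_cover_card_le_sum_mul_harmonic hw U hU
  refine ⟨T, hTP, hTcov, hTcard.trans ?_⟩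
  rw [mul_sum]
  refine sum_le_sum fun x hx => ?_
  rw [mul_comm (harmonic m)]
  exact mul_le_mul_of_nonneg_left (harmonic_mono (hm x hx)) (hw x hx)

end GreedyCover

theorem train_track_upper_bound_general (n f ℓ : ℕ) (hn : 1 ≤ n)
    (C : Finset ℤ) (hC : C ⊆ Finset.Icc 1 (f : ℤ)) (hCcard : C.card = n) :
    ∃ T ⊆ Finset.Icc (1 : ℤ) (ℓ : ℤ),
      (∀ k ∈ Finset.Icc (0 : ℤ) ((ℓ : ℤ) - (f : ℤ)),
        ((C.image (fun c => c + k)) ∩ T).Nonempty) ∧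
      (T.card : ℝ) ≤ (ℓ : ℝ) * (1 + Real.log n) / n := by
  set P := Icc (1 : ℤ) ℓ
  set U := Icc (0 : ℤ) (ℓ - f)
  have htranslate : ∀ k ∈ U, {x ∈ P | x - k ∈ C} = C.image (· + k) := by
    intro k hk
    ext x
    simp only [mem_filter, mem_image, P, U, mem_Icc] at hk ⊢
    constructor
    · rintro ⟨-, hx⟩
      exact ⟨x - k, hx, by ring⟩
    · rintro ⟨c, hc, rfl⟩
      have := mem_Icc.1 (hC hc)
      exact ⟨by omega, by simpa using hc⟩
  have hcover : ∀ k ∈ U, 1 ≤ ∑ x ∈ P with x - k ∈ C, (n : ℚ)⁻¹ := by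
    intro k hk
    rw [htranslate k hk, sum_const, card_image_of_injective _ (add_left_injective k), hCcard,
      nsmul_eq_mul, mul_inv_cancel₀ (by positivity)]
  have hdegree : ∀ x ∈ P, #{k ∈ U | x - k ∈ C} ≤ n :=
    fun x _ => hCcard ▸ card_le_card_of_injOn (x - ·) (fun k hk => (mem_filter.1 hk).2)
      (fun a _ b _ h => by simpa using h)
  obtain ⟨T, hTP, hTcov, hTcard⟩ := exists_cover_card_le_harmonic_mul_sum
    (r := fun x k => x - k ∈ C) (fun _ _ => by positivity) U hcover hdegree
  refine ⟨T, hTP, fun k hk => ?_, ?_⟩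
  · obtain ⟨x, hxT, hx⟩ := hTcov k hk
    exact ⟨x, mem_inter.2 ⟨mem_image.2 ⟨x - k, hx, by ring⟩, hxT⟩⟩
  · rw [sum_const, show #P = ℓ by simp [P], nsmul_eq_mul] at hTcard
    calc (#T : ℝ) ≤ (harmonic n : ℝ) * (ℓ * (n : ℝ)⁻¹) := by
          simpa using (Rat.cast_le (K := ℝ)).2 hTcard
      _ = ℓ * (harmonic n : ℝ) / n := by ring
      _ ≤ ℓ * (1 + Real.log n) / n := by gcongr; exact harmonic_le_one_add_log n

/-- **Upper bound.** For any configuration of `n` wheels `C ⊆ {1, …, f}`, there is a track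
`T ⊆ {1, …, ℓ}` supporting `C` at every offset `k ∈ {0, …, ℓ - f}` with
`|T| ≤ ℓ·(1 + ln n)/n`. -/
theorem train_track_upper_bound (n f ℓ : ℕ) (hn : 1 ≤ n) (hf : 0 < f) (hℓ : 0 < ℓ)
    (hfl : f ≤ ℓ) (C : Finset ℤ) (hC : C ⊆ Finset.Icc 1 (f : ℤ)) (hCcard : C.card = n) :
    ∃ T ⊆ Finset.Icc (1 : ℤ) (ℓ : ℤ),
      (∀ k ∈ Finset.Icc (0 : ℤ) ((ℓ : ℤ) - (f : ℤ)),
        ((C.image (fun c => c + k)) ∩ T).Nonempty) ∧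
      (T.card : ℝ) ≤ (ℓ : ℝ) * (1 + Real.log n) / n :=
  train_track_upper_bound_general n f ℓ hn C hC hCcard
end

section
/- There exists n₀ such that for every integer n ≥ n₀ the following holds: there exists a set C ⊆ {1, 2, …, 2n} with |C| ≥ n such that every track T ⊆ {1, 2, …, 4n} satisfying (C + k) ∩ T ≠ ∅ for all k ∈ {0, 1, …, 2n} must have |T| > (ln n)/4. -/
/-!
Count wheel sets `C ⊆ {1, …, 2n}`. Fix a track `T` with at most `m = ⌊ln n / 4⌋` pillars. A
maximal set `K` of offsets whose pairwise differences avoid `T - T` has `|K| ≥ (2n + 1) / m²`, and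
for `k ∈ K` the sets `{c | c + k ∈ T}` are pairwise disjoint, so at most a fraction
`(1 - 2⁻ᵐ) ^ |K|` of all `C` are supported by `T` at every offset of `K`. This is much smaller than
the reciprocal of the number `(m + 1) (4n) ^ m` of such tracks, and at most half of all `C` have
fewer than `n` elements, so some `C` with at least `n` wheels is supported by no such track.
-/

open Finset Real Pointwise

theorem card_filter_forall_inter_nonempty_le {α ι : Type*} [DecidableEq α] [DecidableEq ι]
    (S : Finset α) (A : ι → Finset α) (K : Finset ι) (hA : ∀ k ∈ K, A k ⊆ S)
    (hK : (K : Set ι).PairwiseDisjoint A) :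
    (#{C ∈ S.powerset | ∀ k ∈ K, (C ∩ A k).Nonempty} : ℝ) ≤
      2 ^ #S * ∏ k ∈ K, (1 - (2 ^ #(A k) : ℝ)⁻¹) := by
  induction K using Finset.induction_on generalizing S with
  | empty => simp
  | @insert a K ha ih =>
    rw [coe_insert, Set.pairwiseDisjoint_insert] at hK
    have hAa : A a ⊆ S := hA a (mem_insert_self a K)
    have hdisj : ∀ k ∈ K, Disjoint (A a) (A k) :=
      fun k hk => hK.2 k hk (ne_of_mem_of_not_mem hk ha).symm
    -- `C` is recovered from its parts inside and outside `A a`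
    have hsplit : {C ∈ S.powerset | ∀ k ∈ insert a K, (C ∩ A k).Nonempty} ⊆
        ((A a).powerset.erase ∅ ×ˢ {C ∈ (S \ A a).powerset | ∀ k ∈ K, (C ∩ A k).Nonempty}).image
          fun XY => XY.1 ∪ XY.2 := by
      intro C hC
      simp only [mem_filter, mem_powerset, forall_mem_insert] at hC
      refine mem_image.2 ⟨(C ∩ A a, C \ A a), ?_, by rw [union_comm, sdiff_union_inter]⟩
      simp only [mem_product, mem_erase, mem_powerset, mem_filter]
      refine ⟨⟨hC.2.1.ne_empty, inter_subset_right⟩, sdiff_subset_sdiff hC.1 le_rfl, fun k hk => ?_⟩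
      obtain ⟨x, hx⟩ := hC.2.2 k hk
      rw [mem_inter] at hx
      exact ⟨x, mem_inter.2 ⟨mem_sdiff.2 ⟨hx.1, disjoint_right.1 (hdisj k hk) hx.2⟩, hx.2⟩⟩
    have hrest := ih (S \ A a)
      (fun k hk => subset_sdiff.2 ⟨hA k (mem_insert_of_mem hk), (hdisj k hk).symm⟩) hK.1
    have hX : (#((A a).powerset.erase ∅) : ℝ) = 2 ^ #(A a) - 1 := by
      rw [card_erase_of_mem (empty_mem_powerset _), card_powerset, Nat.cast_sub Nat.one_le_two_pow]
      simp
    have hS : (2 : ℝ) ^ #S = 2 ^ #(S \ A a) * 2 ^ #(A a) := by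
      rw [← pow_add, card_sdiff_add_card_eq_card hAa]
    calc (#{C ∈ S.powerset | ∀ k ∈ insert a K, (C ∩ A k).Nonempty} : ℝ)
        ≤ #((A a).powerset.erase ∅) *
            #{C ∈ (S \ A a).powerset | ∀ k ∈ K, (C ∩ A k).Nonempty} := by
          exact_mod_cast (card_le_card hsplit).trans (card_image_le.trans (card_product _ _).le)
      _ ≤ (2 ^ #(A a) - 1) * (2 ^ #(S \ A a) * ∏ k ∈ K, (1 - (2 ^ #(A k) : ℝ)⁻¹)) := by
          rw [hX]; gcongr; exact sub_nonneg.2 (one_le_pow₀ (by norm_num))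
      _ = 2 ^ #S * ∏ k ∈ insert a K, (1 - (2 ^ #(A k) : ℝ)⁻¹) := by
          rw [prod_insert ha, hS]; field_simp

theorem exists_subset_pairwise_sub_notMem {G : Type*} [AddGroup G] [DecidableEq G]
    (K₀ D : Finset G) (hD₀ : 0 ∈ D) (hD : ∀ d ∈ D, -d ∈ D) :
    ∃ K ⊆ K₀, (K : Set G).Pairwise (fun k k' => k - k' ∉ D) ∧ #K₀ ≤ #K * #D := by
  classical
  obtain ⟨K, hK, hmax⟩ := exists_max_image
    (K₀.powerset.filter fun K : Finset G => (K : Set G).Pairwise fun k k' => k - k' ∉ D) card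
    ⟨∅, by simp⟩
  rw [mem_filter, mem_powerset] at hK
  refine ⟨K, hK.1, hK.2, ?_⟩
  -- by maximality of `K`
  have hcover : K₀ ⊆ D + K := by
    intro k' hk'
    by_contra hout
    have hnear : ∀ k ∈ K, k' - k ∉ D := fun k hk hd =>
      hout (mem_add.2 ⟨k' - k, hd, k, hk, sub_add_cancel k' k⟩)
    have hk'K : k' ∉ K := fun hk => hnear k' hk (by rwa [sub_self])
    have hins := hmax (insert k' K) (by
      rw [mem_filter, mem_powerset, coe_insert]
      refine ⟨insert_subset hk' hK.1, hK.2.insert fun k hk _ => ⟨hnear k hk, fun hd => ?_⟩⟩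
      exact hnear k hk (by simpa using hD _ hd))
    rw [card_insert_of_notMem hk'K] at hins
    omega
  calc #K₀ ≤ #(D + K) := card_le_card hcover
    _ ≤ #D * #K := card_add_le
    _ = #K * #D := mul_comm _ _

theorem two_mul_card_filter_two_mul_card_lt_le {α : Type*} [DecidableEq α] (S : Finset α) :
    2 * #{C ∈ S.powerset | 2 * #C < #S} ≤ 2 ^ #S := by
  -- complementation maps the small subsets of `S` injectively to large ones
  have hcompl : #{C ∈ S.powerset | 2 * #C < #S} ≤ #{C ∈ S.powerset | ¬ 2 * #C < #S} := by
    refine card_le_card_of_injOn (S \ ·) (fun C hC => ?_) (fun C hC C' hC' h => ?_)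
    · simp only [coe_filter, mem_powerset, Set.mem_ofPred_eq] at hC ⊢
      rw [card_sdiff_of_subset hC.1]
      have := card_le_card hC.1
      exact ⟨sdiff_subset, by omega⟩
    · simp only [coe_filter, mem_powerset, Set.mem_ofPred_eq] at hC hC'
      exact (sdiff_right_inj hC.1 hC'.1).1 h
  have := card_filter_add_card_filter_not (s := S.powerset) fun C => 2 * #C < #S
  rw [card_powerset] at this
  omega

theorem exists_two_mul_card_ge_forall_notMem {α ι : Type*} [DecidableEq α] (S : Finset α)
    (𝒯 : Finset ι) (B : ι → Finset (Finset α)) (h : 2 * ∑ T ∈ 𝒯, #(B T) < 2 ^ #S) :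
    ∃ C ⊆ S, #S ≤ 2 * #C ∧ ∀ T ∈ 𝒯, C ∉ B T := by
  have hsmall := two_mul_card_filter_two_mul_card_lt_le S
  have hlt : #({C ∈ S.powerset | 2 * #C < #S} ∪ 𝒯.biUnion B) < #S.powerset := by
    have := card_union_le {C ∈ S.powerset | 2 * #C < #S} (𝒯.biUnion B)
    have := card_biUnion_le (s := 𝒯) (t := B)
    rw [card_powerset]
    omega
  obtain ⟨C, hC, hCnot⟩ := exists_mem_notMem_of_card_lt_card hlt
  simp only [mem_union, mem_filter, mem_biUnion, not_or, not_and, not_exists, not_lt] at hCnot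
  exact ⟨C, mem_powerset.1 hC, hCnot.1 hC, hCnot.2⟩

theorem card_filter_card_le_le {α : Type*} [DecidableEq α] (W : Finset α) (m : ℕ)
    (hW : W.Nonempty) :
    #{T ∈ W.powerset | #T ≤ m} ≤ (m + 1) * #W ^ m := by
  have hsub : {T ∈ W.powerset | #T ≤ m} ⊆ (range (m + 1)).biUnion fun j => powersetCard j W := by
    intro T hT
    rw [mem_filter, mem_powerset] at hT
    exact mem_biUnion.2 ⟨#T, mem_range.2 (Nat.lt_succ_of_le hT.2), mem_powersetCard.2 ⟨hT.1, rfl⟩⟩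
  calc #{T ∈ W.powerset | #T ≤ m}
      ≤ ∑ j ∈ range (m + 1), #(powersetCard j W) := (card_le_card hsub).trans card_biUnion_le
    _ ≤ ∑ _j ∈ range (m + 1), #W ^ m := sum_le_sum fun j hj => by
        rw [card_powersetCard]
        exact (Nat.choose_le_pow _ _).trans
          (Nat.pow_le_pow_right hW.card_pos (Nat.lt_succ_iff.1 (mem_range.1 hj)))
    _ = (m + 1) * #W ^ m := by rw [sum_const, card_range, smul_eq_mul]

theorem one_sub_inv_two_pow_nonneg (j : ℕ) : (0 : ℝ) ≤ 1 - (2 ^ j : ℝ)⁻¹ :=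
  sub_nonneg.2 (inv_le_one_of_one_le₀ (one_le_pow₀ (by norm_num)))

theorem card_filter_supports_le {G : Type*} [AddCommGroup G] [DecidableEq G]
    (S K₀ T : Finset G) (m : ℕ) (hT : #T ≤ m) :
    (#{C ∈ S.powerset | ∀ k ∈ K₀, ((C.image (· + k)) ∩ T).Nonempty} : ℝ) ≤
      2 ^ #S * (1 - (2 ^ m : ℝ)⁻¹) ^ (#K₀ / (m * m)) := by
  obtain rfl | ⟨t, ht⟩ := T.eq_empty_or_nonempty
  · obtain rfl | ⟨k, hk⟩ := K₀.eq_empty_or_nonempty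
    · simp
    · rw [filter_false_of_mem fun C _ h => by simpa using h k hk]
      simp only [card_empty, CharP.cast_eq_zero]
      exact mul_nonneg (by positivity) (pow_nonneg (one_sub_inv_two_pow_nonneg m) _)
  obtain ⟨K, hKK₀, hK, hK₀K⟩ := exists_subset_pairwise_sub_notMem K₀ (T - T)
    (by simpa using sub_mem_sub ht ht) fun d hd => by
      obtain ⟨a, ha, b, hb, rfl⟩ := mem_sub.1 hd
      simpa using sub_mem_sub hb ha
  set A : G → Finset G := fun k => {c ∈ S | c + k ∈ T}
  have hdisj : (K : Set G).PairwiseDisjoint A := fun k hk k' hk' hne =>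
    disjoint_left.2 fun c hc hc' => hK hk hk' hne <| by
      simpa using sub_mem_sub (mem_filter.1 hc).2 (mem_filter.1 hc').2
  have hA : ∀ k, #(A k) ≤ m := fun k =>
    (card_le_card_of_injOn (· + k) (fun c hc => (mem_filter.1 hc).2)
      fun _ _ _ _ h => add_right_cancel h).trans hT
  have hsupp : {C ∈ S.powerset | ∀ k ∈ K₀, ((C.image (· + k)) ∩ T).Nonempty} ⊆
      {C ∈ S.powerset | ∀ k ∈ K, (C ∩ A k).Nonempty} := by
    refine monotone_filter_right _ fun C hC hCT k hk => ?_
    obtain ⟨_, hcT⟩ := hCT k (hKK₀ hk)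
    obtain ⟨hcC, hcT⟩ := mem_inter.1 hcT
    obtain ⟨c, hc, rfl⟩ := mem_image.1 hcC
    exact ⟨c, mem_inter.2 ⟨hc, mem_filter.2 ⟨mem_powerset.1 hC hc, hcT⟩⟩⟩
  have hKcard : #K₀ / (m * m) ≤ #K :=
    Nat.div_le_of_le_mul <| hK₀K.trans <| by
      rw [mul_comm]; gcongr; exact card_sub_le.trans (by gcongr)
  calc (#{C ∈ S.powerset | ∀ k ∈ K₀, ((C.image (· + k)) ∩ T).Nonempty} : ℝ)
      ≤ #{C ∈ S.powerset | ∀ k ∈ K, (C ∩ A k).Nonempty} := by exact_mod_cast card_le_card hsupp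
    _ ≤ 2 ^ #S * ∏ k ∈ K, (1 - (2 ^ #(A k) : ℝ)⁻¹) :=
      card_filter_forall_inter_nonempty_le S A K (fun k _ => filter_subset _ _) hdisj
    _ ≤ 2 ^ #S * (1 - (2 ^ m : ℝ)⁻¹) ^ #K := by
      gcongr
      rw [← prod_const]
      exact prod_le_prod (fun k _ => one_sub_inv_two_pow_nonneg _) fun k _ => by
        gcongr
        · norm_num
        · exact hA k
    _ ≤ 2 ^ #S * (1 - (2 ^ m : ℝ)⁻¹) ^ (#K₀ / (m * m)) :=
      mul_le_mul_of_nonneg_left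
        (pow_le_pow_of_le_one (one_sub_inv_two_pow_nonneg m) (by simp) hKcard) (by positivity)

theorem two_mul_pow_mul_one_sub_inv_two_pow_pow_lt_one {m n : ℕ} (hm : 3 ≤ m)
    (hn : exp (4 * m) ≤ n) (hn' : (n : ℝ) < exp (4 * m + 4)) :
    2 * ((m + 1) * (4 * n : ℝ) ^ m) * (1 - (2 ^ m : ℝ)⁻¹) ^ ((2 * n + 1) / (m * m)) < 1 := by
  set r := (2 * n + 1) / (m * m)
  have hm3 : (3 : ℝ) ≤ m := by exact_mod_cast hm
  have hm0 : (0 : ℝ) < m * m := by positivity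
  have h2e : (2 : ℝ) ≤ exp 1 := by linarith [add_one_le_exp (1 : ℝ)]
  have hr : (2 * n + 1 : ℝ) < (r + 1) * (m * m) := by
    have := Nat.lt_div_mul_add (a := 2 * n + 1) (Nat.mul_pos (by omega : 0 < m) (by omega : 0 < m))
    rw [← add_one_mul] at this
    exact_mod_cast this
  have hpoly : (4 * m ^ 2 + 7 * m + 2) * m ^ 2 < 2 * exp (3 * m) := by
    have h := pow_div_factorial_le_exp (3 * m : ℝ) (by positivity) 5
    norm_num [Nat.factorial] at h
    have h3 : 0 ≤ ((m : ℝ) - 3) * m ^ 4 := mul_nonneg (by linarith) (by positivity)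
    nlinarith [pow_pos (by positivity : (0 : ℝ) < m) 2, pow_pos (by positivity : (0 : ℝ) < m) 3]
  -- `r ≈ 2 n / m² ≥ 2 exp (3 m) exp m / m²`, and `exp (3 m)` outgrows `m ^ 4`
  have hrm : (4 * m ^ 2 + 7 * m + 1) * exp m < r := by
    have hexp : exp (4 * m) = exp (3 * m) * exp m := by rw [← exp_add]; ring_nf
    have h1 : (1 : ℝ) ≤ exp m := one_le_exp (by positivity)
    refine lt_of_mul_lt_mul_right ?_ hm0.le
    nlinarith [exp_pos (3 * (m : ℝ))]
  have hpow : (2 : ℝ) ^ m ≤ exp m := by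
    rw [← exp_one_pow]; exact pow_le_pow_left₀ (by norm_num) h2e m
  have hfactor : 2 * ((m : ℝ) + 1) ≤ exp (m + 1) := by
    rw [exp_add]
    exact mul_comm (2 : ℝ) _ ▸ mul_le_mul (add_one_le_exp _) h2e (by norm_num) (exp_pos _).le
  have hbase : (4 * n : ℝ) ^ m ≤ exp (m * (4 * m + 6)) := by
    rw [exp_nat_mul]
    gcongr
    calc (4 * n : ℝ) ≤ exp 1 ^ 2 * exp (4 * m + 4) := by gcongr; nlinarith
      _ = exp (4 * m + 6) := by rw [← exp_nat_mul, ← exp_add]; ring_nf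
  have htail : (1 - (2 ^ m : ℝ)⁻¹) ^ r < exp (-(4 * m ^ 2 + 7 * m + 1)) := by
    calc (1 - (2 ^ m : ℝ)⁻¹) ^ r ≤ exp (-(2 ^ m : ℝ)⁻¹) ^ r :=
          pow_le_pow_left₀ (one_sub_inv_two_pow_nonneg m) (one_sub_le_exp_neg _) r
      _ = exp (-(r / 2 ^ m)) := by rw [← exp_nat_mul]; ring_nf
      _ ≤ exp (-(r / exp m)) := by gcongr
      _ < exp (-(4 * m ^ 2 + 7 * m + 1)) := by
          rw [exp_lt_exp, neg_lt_neg_iff, lt_div_iff₀ (exp_pos _)]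
          exact hrm
  calc 2 * ((m + 1) * (4 * n : ℝ) ^ m) * (1 - (2 ^ m : ℝ)⁻¹) ^ r
      = 2 * (m + 1) * (4 * n : ℝ) ^ m * (1 - (2 ^ m : ℝ)⁻¹) ^ r := by ring
    _ ≤ exp (m + 1) * exp (m * (4 * m + 6)) * (1 - (2 ^ m : ℝ)⁻¹) ^ r := by
        gcongr
        exact pow_nonneg (one_sub_inv_two_pow_nonneg m) r
    _ < exp (m + 1) * exp (m * (4 * m + 6)) * exp (-(4 * m ^ 2 + 7 * m + 1)) := by
        gcongr
    _ = 1 := by rw [← exp_add, ← exp_add, ← exp_zero]; ring_nf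

theorem exists_large_subset_not_supported (n m : ℕ) (hn : 0 < n)
    (h : 2 * ((m + 1) * (4 * n : ℝ) ^ m) * (1 - (2 ^ m : ℝ)⁻¹) ^ ((2 * n + 1) / (m * m)) < 1) :
    ∃ C ⊆ Icc (1 : ℤ) (2 * n : ℕ), n ≤ #C ∧ ∀ T ⊆ Icc (1 : ℤ) (4 * n : ℕ), #T ≤ m →
      ¬ ∀ k ∈ Icc (0 : ℤ) (2 * n : ℕ), ((C.image (· + k)) ∩ T).Nonempty := by
  set S := Icc (1 : ℤ) (2 * n : ℕ)
  set W := Icc (1 : ℤ) (4 * n : ℕ)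
  set K₀ := Icc (0 : ℤ) (2 * n : ℕ)
  have hS : #S = 2 * n := by simp [S]; omega
  have hW : #W = 4 * n := by simp [W]; omega
  have hK₀ : #K₀ = 2 * n + 1 := by simp [K₀]; omega
  set 𝒯 := {T ∈ W.powerset | #T ≤ m}
  have h𝒯 : (#𝒯 : ℝ) ≤ (m + 1) * (4 * n : ℝ) ^ m := by
    have := card_filter_card_le_le W m (card_pos.1 (by omega))
    rw [hW] at this
    exact_mod_cast this
  set B : Finset ℤ → Finset (Finset ℤ) :=
    fun T => {C ∈ S.powerset | ∀ k ∈ K₀, ((C.image (· + k)) ∩ T).Nonempty}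
  have hcount : 2 * ∑ T ∈ 𝒯, #(B T) < 2 ^ #S := by
    have h2S : (0 : ℝ) < 2 ^ #S := by positivity
    have hx := pow_nonneg (one_sub_inv_two_pow_nonneg m) ((2 * n + 1) / (m * m))
    suffices (2 * ∑ T ∈ 𝒯, #(B T) : ℝ) < 2 ^ #S by exact_mod_cast this
    calc (2 * ∑ T ∈ 𝒯, #(B T) : ℝ)
        ≤ 2 * ∑ _T ∈ 𝒯, 2 ^ #S * (1 - (2 ^ m : ℝ)⁻¹) ^ ((2 * n + 1) / (m * m)) := by
          rw [← hK₀, Nat.cast_sum]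
          gcongr 2 * ?_
          exact sum_le_sum fun T hT => card_filter_supports_le S K₀ T m (mem_filter.1 hT).2
      _ = 2 * #𝒯 * (1 - (2 ^ m : ℝ)⁻¹) ^ ((2 * n + 1) / (m * m)) * 2 ^ #S := by
          rw [sum_const, nsmul_eq_mul]; ring
      _ ≤ 2 * ((m + 1) * (4 * n : ℝ) ^ m) * (1 - (2 ^ m : ℝ)⁻¹) ^ ((2 * n + 1) / (m * m)) *
          2 ^ #S := by gcongr
      _ < 2 ^ #S := mul_lt_of_lt_one_left h2S h
  obtain ⟨C, hCS, hC, hCT⟩ := exists_two_mul_card_ge_forall_notMem S 𝒯 B hcount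
  refine ⟨C, hCS, by omega, fun T hTW hTm hsupp => hCT T ?_ ?_⟩
  · exact mem_filter.2 ⟨mem_powerset.2 hTW, hTm⟩
  · exact mem_filter.2 ⟨mem_powerset.2 hCS, hsupp⟩

/-- **Lower bound.** For all sufficiently large `n`, there is a set `C ⊆ {1, …, 2n}` of at
least `n` wheels such that every track `T ⊆ {1, …, 4n}` supporting `C` at all offsets
`k ∈ {0, …, 2n}` has more than `(ln n)/4` pillars. -/
theorem train_track_lower_bound : ∃ n₀ : ℕ, ∀ n : ℕ, n₀ ≤ n →
    ∃ C ⊆ Finset.Icc (1 : ℤ) (2 * n : ℕ), n ≤ C.card ∧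
      ∀ T ⊆ Finset.Icc (1 : ℤ) (4 * n : ℕ),
        (∀ k ∈ Finset.Icc (0 : ℤ) (2 * n : ℕ),
          ((C.image (fun c => c + k)) ∩ T).Nonempty) →
        Real.log n / 4 < (T.card : ℝ) := by
  refine ⟨⌈exp 12⌉₊, fun n hn => ?_⟩
  have hn12 : exp 12 ≤ n := Nat.ceil_le.1 hn
  have hn0 : (0 : ℝ) < n := (exp_pos 12).trans_le hn12
  have hlog : 12 ≤ log n := (le_log_iff_exp_le hn0).2 hn12
  set m := ⌊log n / 4⌋₊
  have hm : 3 ≤ m := Nat.le_floor (by push_cast; linarith)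
  have hlow : exp (4 * m) ≤ n := by
    rw [← exp_log hn0, exp_le_exp]
    linarith [Nat.floor_le (by linarith : 0 ≤ log n / 4)]
  have hhigh : (n : ℝ) < exp (4 * m + 4) := by
    rw [← exp_log hn0, exp_lt_exp]
    linarith [Nat.lt_floor_add_one (log n / 4)]
  obtain ⟨C, hCS, hC, hCT⟩ := exists_large_subset_not_supported n m (by exact_mod_cast hn0)
    (two_mul_pow_mul_one_sub_inv_two_pow_pow_lt_one hm hlow hhigh)
  refine ⟨C, hCS, hC, fun T hTW hT => ?_⟩
  by_contra! hTm
  exact hCT T hTW (Nat.le_floor hTm) hT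
end

section
/- There exists n₀ such that for every integer n ≥ n₀, the number of subsets C ⊆ {1, 2, …, 2n} for which there exists a track T ⊆ {1, 2, …, 4n} with |T| ≤ (ln n)/4 satisfying (C + k) ∩ T ≠ ∅ for all k ∈ {0, 1, …, 2n} is strictly less than 2^{2n−1}. -/
/-!
Fix a track `T` with at most `t` pillars. Greedily, a fraction `1 / (t² + 1)` of the offsets can
be chosen with pairwise differences outside `T - T`; for these offsets `k` the sets
`{c | c + k ∈ T}` of wheel positions are pairwise disjoint and of size at most `t`, and a car
supported by `T` meets each of them. Hence at most a fraction
`(1 - 2⁻ᵗ) ^ ((2n + 1) / (t² + 1)) ≤ exp (-(2n + 1) / ((t² + 1) 2ᵗ))` of all cars is supported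
by `T`. A union bound over the at most `(4n + 1) ^ t` tracks leaves a fraction below `1 / 2`
once `t ≤ (log n) / 4`, because `(log n) ^ 4 = o(n ^ (3 / 4))`.
-/

open Finset Real Filter
open scoped Pointwise

namespace Finset

variable {α : Type*} [DecidableEq α]

theorem exists_pairwise_not_rel_subset (r : α → α → Prop) [DecidableRel r] [Std.Symm r] (d : ℕ) :
    ∀ A : Finset α, (∀ a ∈ A, #{b ∈ A | r a b} ≤ d) →
      ∃ K ⊆ A, (K : Set α).Pairwise (fun a b => ¬ r a b) ∧ #A ≤ #K * (d + 1) := by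
  intro A
  induction A using Finset.strongInduction with
  | _ A ih =>
  intro hdeg
  obtain rfl | ⟨a, ha⟩ := A.eq_empty_or_nonempty
  · exact ⟨∅, by simp⟩
  set N := insert a {b ∈ A | r a b}
  have hNA : N ⊆ A := insert_subset ha (filter_subset _ _)
  obtain ⟨K, hKA, hK, hcard⟩ := ih (A \ N) (sdiff_ssubset hNA (insert_nonempty a _))
    fun b hb =>
      (card_le_card (filter_subset_filter _ sdiff_subset)).trans (hdeg b (mem_sdiff.1 hb).1)
  have hfar : ∀ b ∈ K, ¬ r a b := fun b hb h =>
    (mem_sdiff.1 (hKA hb)).2 (mem_insert_of_mem (mem_filter.2 ⟨(mem_sdiff.1 (hKA hb)).1, h⟩))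
  have haK : a ∉ K := fun h => (mem_sdiff.1 (hKA h)).2 (mem_insert_self a _)
  have : Std.Symm fun a b => ¬ r a b := ⟨fun x y h h' => h (Std.Symm.symm _ _ h')⟩
  refine ⟨insert a K, insert_subset ha (hKA.trans sdiff_subset), ?_, ?_⟩
  · rw [coe_insert, Set.pairwise_insert_of_symm]
    exact ⟨hK, fun b hb _ => hfar b hb⟩
  · calc #A = #(A \ N) + #N := (card_sdiff_add_card_eq_card hNA).symm
      _ ≤ #K * (d + 1) + (d + 1) :=
          add_le_add hcard ((card_insert_le _ _).trans (by simpa using hdeg a ha))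
      _ = #(insert a K) * (d + 1) := by rw [card_insert_of_notMem haK]; ring

theorem card_filter_inter_nonempty_and_le (S U : Finset α) (P : Finset α → Prop) [DecidablePred P] :
    #{C ∈ U.powerset | (C ∩ S).Nonempty ∧ P (C \ S)} ≤
      (2 ^ #S - 1) * #{C ∈ (U \ S).powerset | P C} := by
  rw [← card_powerset S, ← card_erase_of_mem (empty_mem_powerset S), ← card_product]
  refine card_le_card_of_injOn (fun C => (C ∩ S, C \ S)) (fun C hC => ?_) fun C₁ _ C₂ _ h => ?_
  · simp only [coe_filter, mem_powerset, Set.mem_ofPred_eq] at hC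
    simp only [coe_product, Set.mem_prod, mem_coe, mem_erase, mem_powerset, mem_filter,
      ← nonempty_iff_ne_empty]
    exact ⟨⟨hC.2.1, inter_subset_right⟩, sdiff_subset_sdiff hC.1 le_rfl, hC.2.2⟩
  · simp only [Prod.mk.injEq] at h
    rw [← sdiff_union_inter C₁ S, ← sdiff_union_inter C₂ S, h.1, h.2]

theorem card_filter_forall_inter_nonempty_le {ι : Type*} [DecidableEq ι] (S : ι → Finset α)
    {t : ℕ} (I : Finset ι) (hI : (I : Set ι).PairwiseDisjoint S) (hS : ∀ i ∈ I, #(S i) ≤ t)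
    (U : Finset α) (hSU : ∀ i ∈ I, S i ⊆ U) :
    (#{C ∈ U.powerset | ∀ i ∈ I, (C ∩ S i).Nonempty} : ℝ) ≤ (1 - 2⁻¹ ^ t) ^ #I * 2 ^ #U := by
  induction I using Finset.induction_on generalizing U with
  | empty => simp
  | insert j I hj ih =>
    rw [coe_insert, Set.pairwiseDisjoint_insert_of_notMem hj] at hI
    have hjU := hSU j (mem_insert_self j I)
    have hsplit : {C ∈ U.powerset | ∀ i ∈ insert j I, (C ∩ S i).Nonempty} =
        {C ∈ U.powerset | (C ∩ S j).Nonempty ∧ ∀ i ∈ I, (C \ S j ∩ S i).Nonempty} := by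
      refine filter_congr fun C _ => ?_
      rw [forall_mem_insert]
      refine and_congr_right' (forall₂_congr fun i hi => ?_)
      rw [sdiff_inter_right_comm,
        sdiff_eq_self_of_disjoint ((hI.2 i hi).symm.mono_left inter_subset_right)]
    have hrest := ih hI.1 (fun i hi => hS i (mem_insert_of_mem hi)) (U \ S j) fun i hi =>
      subset_sdiff.2 ⟨hSU i (mem_insert_of_mem hi), (hI.2 i hi).symm⟩
    have hpow : (2 : ℝ) ^ #U = 2 ^ #(S j) * 2 ^ #(U \ S j) := by
      rw [← pow_add, add_comm, card_sdiff_add_card_eq_card hjU]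
    have hfirst : (2 : ℝ) ^ #(S j) - 1 ≤ (1 - 2⁻¹ ^ t) * 2 ^ #(S j) := by
      have : (2⁻¹ : ℝ) ^ t * 2 ^ #(S j) ≤ 1 := by
        rw [inv_pow, inv_mul_le_one₀ (by positivity)]
        exact pow_le_pow_right₀ one_le_two (hS j (mem_insert_self j I))
      linarith
    have hcast := card_filter_inter_nonempty_and_le (S j) U fun C => ∀ i ∈ I, (C ∩ S i).Nonempty
    rw [← Nat.cast_le (α := ℝ), Nat.cast_mul, Nat.cast_sub Nat.one_le_two_pow] at hcast
    push_cast at hcast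
    rw [hsplit, card_insert_of_notMem hj, hpow]
    calc _ ≤ ((2 : ℝ) ^ #(S j) - 1) * #{C ∈ (U \ S j).powerset | ∀ i ∈ I, (C ∩ S i).Nonempty} :=
          hcast
      _ ≤ (1 - 2⁻¹ ^ t) * 2 ^ #(S j) * ((1 - 2⁻¹ ^ t) ^ #I * 2 ^ #(U \ S j)) :=
          mul_le_mul hfirst hrest (by positivity)
            (mul_nonneg (sub_nonneg.2 (pow_le_one₀ (by norm_num) (by norm_num))) (by positivity))
      _ = _ := by ring

theorem card_powerset_filter_card_le (V : Finset α) (t : ℕ) :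
    #{T ∈ V.powerset | #T ≤ t} ≤ (#V + 1) ^ t := by
  have hsub : {T ∈ V.powerset | #T ≤ t} ⊆ (range (t + 1)).biUnion (V.powersetCard ·) := by
    intro T hT
    rw [mem_filter, mem_powerset] at hT
    exact mem_biUnion.2 ⟨#T, mem_range.2 (Nat.lt_succ_of_le hT.2), mem_powersetCard.2 ⟨hT.1, rfl⟩⟩
  calc _ ≤ ∑ j ∈ range (t + 1), #(V.powersetCard j) := (card_le_card hsub).trans card_biUnion_le
    _ ≤ ∑ j ∈ range (t + 1), #V ^ j * 1 ^ (t - j) * t.choose j := by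
        refine sum_le_sum fun j hj => ?_
        rw [card_powersetCard, one_pow, mul_one]
        exact (Nat.choose_le_pow _ _).trans
          (Nat.le_mul_of_pos_right _ (Nat.choose_pos (Nat.le_of_lt_succ (mem_range.1 hj))))
    _ = (#V + 1) ^ t := (add_pow _ _ _).symm

end Finset

section Tracks

variable {G : Type*} [AddCommGroup G] [DecidableEq G]

theorem card_filter_supported_le (U Off T : Finset G) {t : ℕ} (hT : #T ≤ t) :
    (#{C ∈ U.powerset | ∀ k ∈ Off, ((C.image (· + k)) ∩ T).Nonempty} : ℝ) ≤
      2 ^ #U * exp (-(#Off / ((t ^ 2 + 1) * 2 ^ t))) := by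
  have : Std.Symm fun a b : G => a - b ∈ T - T := ⟨fun a b h => by
    obtain ⟨x, hx, y, hy, hxy⟩ := mem_sub.1 h
    exact mem_sub.2 ⟨y, hy, x, hx, by rw [← neg_sub, hxy, neg_sub]⟩⟩
  obtain ⟨K, hKOff, hK, hOffK⟩ := exists_pairwise_not_rel_subset (fun a b => a - b ∈ T - T) (t ^ 2)
    Off fun a _ => calc
      #{b ∈ Off | a - b ∈ T - T} ≤ #(T - T) :=
        card_le_card_of_injOn (a - ·) (fun b hb => (mem_filter.1 hb).2)
          fun _ _ _ _ h => sub_right_injective h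
      _ ≤ #T * #T := card_sub_le
      _ ≤ t ^ 2 := sq t ▸ Nat.mul_le_mul hT hT
  set S : G → Finset G := fun k => {c ∈ U | c + k ∈ T}
  have hdisj : (K : Set G).PairwiseDisjoint S := fun k hk k' hk' hne =>
    disjoint_left.2 fun c hc hc' => hK hk hk' hne
      (mem_sub.2 ⟨c + k, (mem_filter.1 hc).2, c + k', (mem_filter.1 hc').2, by abel⟩)
  have hScard : ∀ k ∈ K, #(S k) ≤ t := fun k _ =>
    (card_le_card_of_injOn (· + k) (fun c hc => (mem_filter.1 hc).2)
      fun _ _ _ _ h => add_right_cancel h).trans hT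
  have hhit : {C ∈ U.powerset | ∀ k ∈ Off, ((C.image (· + k)) ∩ T).Nonempty} ⊆
      {C ∈ U.powerset | ∀ k ∈ K, (C ∩ S k).Nonempty} :=
      monotone_filter_right _ fun C hC h k hk => by
    obtain ⟨_, hx⟩ := h k (hKOff hk)
    obtain ⟨c, hc, rfl⟩ := mem_image.1 (mem_inter.1 hx).1
    exact ⟨c, mem_inter.2 ⟨hc, mem_filter.2 ⟨mem_powerset.1 hC hc, (mem_inter.1 hx).2⟩⟩⟩
  have hexp : (1 - 2⁻¹ ^ t : ℝ) ^ #K ≤ exp (-(#Off / ((t ^ 2 + 1) * 2 ^ t))) := calc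
    (1 - 2⁻¹ ^ t : ℝ) ^ #K ≤ exp (-(2⁻¹ ^ t)) ^ #K :=
        pow_le_pow_left₀ (sub_nonneg.2 (pow_le_one₀ (by norm_num) (by norm_num)))
          (one_sub_le_exp_neg _) _
    _ = exp (-(#K / 2 ^ t)) := by rw [← exp_nat_mul, inv_pow, div_eq_mul_inv, mul_neg]
    _ ≤ exp (-(#Off / ((t ^ 2 + 1) * 2 ^ t))) := by
        have : (#Off : ℝ) ≤ #K * (t ^ 2 + 1) := by exact_mod_cast hOffK
        refine exp_le_exp.2 (neg_le_neg ?_)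
        rw [div_le_div_iff₀ (by positivity) (by positivity), ← mul_assoc]
        gcongr
  calc (#{C ∈ U.powerset | ∀ k ∈ Off, ((C.image (· + k)) ∩ T).Nonempty} : ℝ)
      ≤ #{C ∈ U.powerset | ∀ k ∈ K, (C ∩ S k).Nonempty} := by exact_mod_cast card_le_card hhit
    _ ≤ (1 - 2⁻¹ ^ t) ^ #K * 2 ^ #U :=
        card_filter_forall_inter_nonempty_le S K hdisj hScard U fun _ _ => filter_subset _ _
    _ ≤ 2 ^ #U * exp (-(#Off / ((t ^ 2 + 1) * 2 ^ t))) := by rw [mul_comm]; gcongr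

open scoped Classical in
theorem card_filter_exists_supported_le (U V Off : Finset G) (t : ℕ) :
    (#{C ∈ U.powerset | ∃ T ⊆ V, #T ≤ t ∧ ∀ k ∈ Off, ((C.image (· + k)) ∩ T).Nonempty} : ℝ) ≤
      (#V + 1) ^ t * (2 ^ #U * exp (-(#Off / ((t ^ 2 + 1) * 2 ^ t)))) := by
  set supported := fun T : Finset G =>
    {C ∈ U.powerset | ∀ k ∈ Off, ((C.image (· + k)) ∩ T).Nonempty}
  set tracks := {T ∈ V.powerset | #T ≤ t}
  have hcover : {C ∈ U.powerset | ∃ T ⊆ V, #T ≤ t ∧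
      ∀ k ∈ Off, ((C.image (· + k)) ∩ T).Nonempty} ⊆ tracks.biUnion supported := by
    intro C hC
    obtain ⟨hCU, T, hTV, hT, hsupp⟩ := mem_filter.1 hC
    exact mem_biUnion.2 ⟨T, mem_filter.2 ⟨mem_powerset.2 hTV, hT⟩, mem_filter.2 ⟨hCU, hsupp⟩⟩
  calc _ ≤ ∑ T ∈ tracks, (#(supported T) : ℝ) := by
        exact_mod_cast (card_le_card hcover).trans card_biUnion_le
    _ ≤ ∑ T ∈ tracks, 2 ^ #U * exp (-(#Off / ((t ^ 2 + 1) * 2 ^ t))) :=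
        sum_le_sum fun T hT => card_filter_supported_le U Off T (mem_filter.1 hT).2
    _ ≤ _ := by
        rw [sum_const, nsmul_eq_mul]
        gcongr
        exact_mod_cast card_powerset_filter_card_le V t

end Tracks

theorem pow_mul_exp_neg_lt_half {x : ℝ} (hx : 0 < x) (hL : 4 ≤ log x)
    (hL4 : log x ^ 4 ≤ exp (3 / 4 * log x)) {t : ℕ} (ht : (t : ℝ) ≤ log x / 4) :
    (4 * x + 1) ^ t * exp (-((2 * x + 1) / ((t ^ 2 + 1) * 2 ^ t))) < 1 / 2 := by
  set L := log x
  have hxL : exp L = x := exp_log hx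
  have ht0 : (0 : ℝ) ≤ t := t.cast_nonneg
  have hgrowth : (4 * x + 1) ^ t ≤ exp (L ^ 2 / 2) := calc
    (4 * x + 1) ^ t ≤ exp (2 * L) ^ t := by
        have h5 : 5 ≤ x := hxL ▸ by linarith [add_one_le_exp L]
        rw [two_mul, exp_add, hxL]
        gcongr
        nlinarith
    _ = exp (t * (2 * L)) := (exp_nat_mul _ _).symm
    _ ≤ exp (L ^ 2 / 2) := exp_le_exp.2 (by nlinarith)
  have hdecay : L ^ 2 ≤ (2 * x + 1) / ((t ^ 2 + 1) * 2 ^ t) := by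
    have h2t : (2 : ℝ) ^ t ≤ exp (L / 4) := calc
      (2 : ℝ) ^ t ≤ exp 1 ^ t := by gcongr; linarith [add_one_le_exp 1]
      _ = exp t := by rw [← exp_nat_mul, mul_one]
      _ ≤ exp (L / 4) := exp_le_exp.2 ht
    have hsq : (t : ℝ) ^ 2 + 1 ≤ L ^ 2 := by nlinarith
    rw [le_div_iff₀ (by positivity)]
    calc L ^ 2 * ((t ^ 2 + 1) * 2 ^ t) ≤ L ^ 2 * (L ^ 2 * exp (L / 4)) := by gcongr
      _ = L ^ 4 * exp (L / 4) := by ring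
      _ ≤ exp (3 / 4 * L) * exp (L / 4) := by gcongr
      _ = x := by rw [← exp_add, ← hxL]; ring_nf
      _ ≤ 2 * x + 1 := by linarith
  calc (4 * x + 1) ^ t * exp (-((2 * x + 1) / ((t ^ 2 + 1) * 2 ^ t)))
      ≤ exp (L ^ 2 / 2) * exp (-L ^ 2) := by gcongr
    _ = (exp (L ^ 2 / 2))⁻¹ := by rw [← exp_add, ← exp_neg]; ring_nf
    _ < 1 / 2 := by
        rw [one_div]
        exact inv_strictAnti₀ two_pos (by nlinarith [add_one_le_exp (L ^ 2 / 2)])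

theorem eventually_pow_mul_exp_neg_lt_half : ∀ᶠ x : ℝ in atTop, ∀ t : ℕ, (t : ℝ) ≤ log x / 4 →
    (4 * x + 1) ^ t * exp (-((2 * x + 1) / ((t ^ 2 + 1) * 2 ^ t))) < 1 / 2 := by
  have hL : ∀ᶠ L : ℝ in atTop, 4 ≤ L ∧ L ^ 4 ≤ exp (3 / 4 * L) :=
    (eventually_ge_atTop 4).and <|
      ((isLittleO_pow_exp_pos_mul_atTop 4 (by norm_num : (0 : ℝ) < 3 / 4)).bound one_pos).mono
        fun L h => by simpa [Even.pow_abs ⟨2, rfl⟩] using h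
  filter_upwards [tendsto_log_atTop.eventually hL, eventually_gt_atTop 0] with x ⟨h4, hL4⟩ hx t ht
  exact pow_mul_exp_neg_lt_half hx h4 hL4 ht

open scoped Classical in
/-- **Strengthened lower bound.** For all sufficiently large `n`, fewer than `2^(2n-1)` of the
subsets `C ⊆ {1, …, 2n}` admit a track `T ⊆ {1, …, 4n}` of at most `(ln n)/4` pillars
supporting `C` at every offset `k ∈ {0, …, 2n}`. -/
theorem train_track_lower_bound_most_cars : ∃ n₀ : ℕ, ∀ n : ℕ, n₀ ≤ n →
    (((Finset.Icc (1 : ℤ) (2 * n : ℕ)).powerset.filter (fun C : Finset ℤ =>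
        ∃ T ⊆ Finset.Icc (1 : ℤ) (4 * n : ℕ), (T.card : ℝ) ≤ Real.log n / 4 ∧
          ∀ k ∈ Finset.Icc (0 : ℤ) (2 * n : ℕ),
            ((C.image (fun c => c + k)) ∩ T).Nonempty)).card
      < 2 ^ (2 * n - 1)) := by
  obtain ⟨n₀, hn₀⟩ := eventually_atTop.1 <|
    (tendsto_natCast_atTop_atTop.eventually eventually_pow_mul_exp_neg_lt_half).and
      (eventually_ge_atTop 1)
  refine ⟨n₀, fun n hn => ?_⟩
  obtain ⟨hsmall, hn1⟩ := hn₀ n hn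
  set t := ⌊log n / 4⌋₊
  have hcount := card_filter_exists_supported_le (Icc (1 : ℤ) (2 * n : ℕ)) (Icc 1 (4 * n : ℕ))
    (Icc 0 (2 * n : ℕ)) t
  rw [show #(Icc (1 : ℤ) (2 * n : ℕ)) = 2 * n by simp; omega,
    show #(Icc (1 : ℤ) (4 * n : ℕ)) = 4 * n by simp; omega,
    show #(Icc (0 : ℤ) (2 * n : ℕ)) = 2 * n + 1 by simp; omega] at hcount
  push_cast at hcount
  rw [← Nat.cast_lt (α := ℝ)]
  calc _ ≤ _ := Nat.cast_le.2 (card_le_card (monotone_filter_right _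
        fun C _ ⟨T, hTV, hT, h⟩ => ⟨T, hTV, Nat.le_floor hT, h⟩))
    _ ≤ _ := hcount
    _ = 2 ^ (2 * n) * ((4 * n + 1) ^ t * exp (-((2 * n + 1) / ((t ^ 2 + 1) * 2 ^ t)))) := by
        ring
    _ < 2 ^ (2 * n) * (1 / 2) := by gcongr; exact hsmall t (Nat.floor_le (by positivity))
    _ = ((2 ^ (2 * n - 1) : ℕ) : ℝ) := by
        rw [Nat.cast_pow, Nat.cast_ofNat, pow_sub₀ _ two_ne_zero (by omega : 1 ≤ 2 * n)]; ring
end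

section
/- Let n ≥ 2 and d ≥ 1 be integers, set f = n·d, and let ℓ ≥ f be an integer. Let C = {d, 2d, …, nd} ⊆ {1, …, f} be n evenly spaced wheel positions. Then there exists a track T ⊆ {1, 2, …, ℓ} such that for every offset k ∈ {0, 1, …, ℓ − f} we have (C + k) ∩ T ≠ ∅, and such that |T| ≤ ℓ/(n − 1) + d. -/
/-!
Take `m = (n - 1) * d` and lay blocks of `d` consecutive pillars every `m` feet: `T` is the set
of `x ∈ [1, ℓ]` with `x % m < d`, which has at most `⌊ℓ / m⌋ + 1` blocks, whence the bound on
`|T|`. If `k % m = q * d + s` with `0 ≤ s < d`, the wheel `n - 1 - q` sits at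
`k + m - q * d ≡ s (mod m)`, i.e. on a pillar.
-/

open Finset

noncomputable def blockTrack (m d ℓ : ℕ) : Finset ℤ := {x ∈ Icc 1 (ℓ : ℤ) | x % m < d}

theorem Int.add_sub_emod_ediv_mul_emod {m d : ℤ} (hm : 0 < m) (hd : 0 < d) (k : ℤ) :
    (k + m - k % m / d * d) % m = k % m % d := by
  have hk := Int.mul_ediv_add_emod k m
  have hr := Int.ediv_mul_add_emod (k % m) d
  have hr0 : 0 ≤ k % m := Int.emod_nonneg k hm.ne'
  have hq0 : 0 ≤ k % m / d := Int.ediv_nonneg hr0 hd.le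
  have : k + m - k % m / d * d = k % m % d + m * (k / m + 1) := by linear_combination -hk - hr
  rw [this, Int.add_mul_emod_self_left]
  exact Int.emod_eq_of_lt (Int.emod_nonneg _ hd.ne') (by nlinarith [Int.emod_lt_of_pos k hm])

theorem card_blockTrack_le (m d ℓ : ℕ) : #(blockTrack m d ℓ) ≤ (ℓ / m + 1) * d := by
  have hsub : blockTrack m d ℓ ⊆
      (range (ℓ / m + 1) ×ˢ range d).image (fun p => ((p.1 * m + p.2 : ℕ) : ℤ)) := by
    intro x hx
    simp only [blockTrack, mem_filter, mem_Icc] at hx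
    obtain ⟨⟨hx1, hxℓ⟩, hxd⟩ := hx
    lift x to ℕ using by omega
    norm_cast at hxℓ hxd
    refine mem_image.2 ⟨(x / m, x % m), ?_, by rw [Nat.div_add_mod']⟩
    simp only [mem_product, mem_range]
    exact ⟨Nat.lt_succ_of_le (Nat.div_le_div_right hxℓ), hxd⟩
  calc #(blockTrack m d ℓ) ≤ #(range (ℓ / m + 1) ×ˢ range d) :=
        (card_le_card hsub).trans card_image_le
    _ = (ℓ / m + 1) * d := by rw [card_product, card_range, card_range]

theorem Nat.cast_div_mul_le_div {α : Type*} [Semifield α] [LinearOrder α] [IsStrictOrderedRing α]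
    (a b d : ℕ) : ((a / (b * d) : ℕ) : α) * d ≤ a / b := by
  rcases eq_or_ne d 0 with rfl | hd
  · simp only [CharP.cast_eq_zero, mul_zero]; positivity
  calc ((a / (b * d) : ℕ) : α) * d ≤ (a / (b * d : ℕ) : α) * d := by gcongr; exact Nat.cast_div_le
    _ = a / b := by push_cast; field_simp

theorem exists_wheel_mem_blockTrack {n d ℓ : ℕ} (hn : 2 ≤ n) (hd : 1 ≤ d) {k : ℤ} (hk : 0 ≤ k)
    (hkℓ : k + (n * d : ℕ) ≤ ℓ) :
    ∃ i ∈ Icc 1 n, (i : ℤ) * d + k ∈ blockTrack ((n - 1) * d) d ℓ := by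
  set m : ℕ := (n - 1) * d with hm
  have hmZ : (m : ℤ) = (n - 1) * d := by
    rw [hm, Nat.cast_mul, Nat.cast_pred (by omega)]
  have hm0 : (0 : ℤ) < m := by exact_mod_cast Nat.mul_pos (by omega) hd
  have hd0 : (0 : ℤ) < d := by exact_mod_cast hd
  obtain ⟨q, hq⟩ : ∃ q : ℕ, (q : ℤ) = k % m / d :=
    ⟨_, Int.toNat_of_nonneg (Int.ediv_nonneg (Int.emod_nonneg k hm0.ne') hd0.le)⟩
  have hqn : (q : ℤ) < n - 1 := by
    rw [hq]
    exact Int.ediv_lt_of_lt_mul hd0 (hmZ ▸ Int.emod_lt_of_pos k hm0)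
  have hi : ((n - 1 - q : ℕ) : ℤ) = n - 1 - q := by omega
  have hwheel : ((n - 1 - q : ℕ) : ℤ) * d + k = k + m - k % m / d * d := by
    rw [hi, ← hq, hmZ]; ring
  refine ⟨n - 1 - q, mem_Icc.2 ⟨by omega, by omega⟩, mem_filter.2 ⟨mem_Icc.2 ⟨?_, ?_⟩, ?_⟩⟩
  · rw [hi]; nlinarith
  · push_cast at hkℓ; rw [hi]; nlinarith
  · rw [hwheel, Int.add_sub_emod_ediv_mul_emod hm0 hd0]
    exact Int.emod_lt_of_pos _ hd0

theorem train_track_evenly_spaced_general (n d ℓ : ℕ) (hn : 2 ≤ n) (hd : 1 ≤ d) :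
    ∃ T ⊆ Finset.Icc (1 : ℤ) (ℓ : ℤ),
      (∀ k ∈ Finset.Icc (0 : ℤ) ((ℓ : ℤ) - (n * d : ℕ)),
        ((((Finset.Icc (1 : ℕ) n).image (fun i : ℕ => (i : ℤ) * (d : ℤ))).image
            (fun c => c + k)) ∩ T).Nonempty) ∧
      (T.card : ℝ) ≤ (ℓ : ℝ) / ((n : ℝ) - 1) + (d : ℝ) := by
  refine ⟨blockTrack ((n - 1) * d) d ℓ, filter_subset _ _, fun k hk => ?_, ?_⟩
  · obtain ⟨hk0, hkℓ⟩ := mem_Icc.1 hk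
    obtain ⟨i, hi, hwheel⟩ := exists_wheel_mem_blockTrack hn hd hk0 (le_sub_iff_add_le.1 hkℓ)
    exact ⟨_, mem_inter.2 ⟨mem_image_of_mem _ (mem_image_of_mem _ hi), hwheel⟩⟩
  · have hcard : (#(blockTrack ((n - 1) * d) d ℓ) : ℝ) ≤ (ℓ / ((n - 1) * d) : ℕ) * d + d := by
      exact_mod_cast (card_blockTrack_le _ d ℓ).trans_eq (Nat.succ_mul _ d)
    have hblocks := Nat.cast_div_mul_le_div (α := ℝ) ℓ (n - 1) d
    rw [Nat.cast_pred (by omega)] at hblocks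
    linarith

/-- **Evenly spaced wheels.** If the `n` wheels are `C = {d, 2d, …, nd}` and `ℓ ≥ f = n·d`,
there is a track `T ⊆ {1, …, ℓ}` supporting `C` at every offset `k ∈ {0, …, ℓ - f}` with
`|T| ≤ ℓ/(n-1) + d`. -/
theorem train_track_evenly_spaced (n d ℓ : ℕ) (hn : 2 ≤ n) (hd : 1 ≤ d)
    (hℓ : n * d ≤ ℓ) :
    ∃ T ⊆ Finset.Icc (1 : ℤ) (ℓ : ℤ),
      (∀ k ∈ Finset.Icc (0 : ℤ) ((ℓ : ℤ) - (n * d : ℕ)),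
        ((((Finset.Icc (1 : ℕ) n).image (fun i : ℕ => (i : ℤ) * (d : ℤ))).image
            (fun c => c + k)) ∩ T).Nonempty) ∧
      (T.card : ℝ) ≤ (ℓ : ℝ) / ((n : ℝ) - 1) + (d : ℝ) :=
  train_track_evenly_spaced_general n d ℓ hn hd
end

section
/- Let n ≥ 1 be an integer and let T ⊆ ℤ be any finite set. Then the sum, over all subsets C ⊆ {1, 2, …, 2n}, of the number of offsets k ∈ {0, 1, …, 2n} with (C + k) ∩ T = ∅, is at least (2n + 1)·2^{2n}/2^{|T|}. -/
/-!
For a fixed offset `k`, the sets `C ⊆ I` with `(C + k) ∩ T = ∅` are exactly the subsets of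
`I \ (T - k)`, and there are at least `2 ^ |I| / 2 ^ |T|` of them. Summing over the `2n + 1`
offsets and exchanging the order of summation gives the bound.
-/

open Finset

namespace Finset

variable {α : Type*} [DecidableEq α]

theorem filter_powerset_disjoint_eq_powerset_sdiff (I F : Finset α) :
    {C ∈ I.powerset | Disjoint C F} = (I \ F).powerset := by
  ext C
  simp [subset_sdiff]

theorem two_pow_card_le_two_pow_card_mul_card_filter_powerset_disjoint (I F : Finset α) :
    2 ^ #I ≤ 2 ^ #F * #{C ∈ I.powerset | Disjoint C F} := by
  rw [filter_powerset_disjoint_eq_powerset_sdiff, card_powerset, ← pow_add, add_comm]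
  exact Nat.pow_le_pow_right two_pos card_le_card_sdiff_add_card

variable {G : Type*} [AddGroup G] [DecidableEq G]

theorem image_add_right_inter_eq_empty_iff (C T : Finset G) (k : G) :
    C.image (· + k) ∩ T = ∅ ↔ Disjoint C (T.image (· - k)) := by
  simp only [← disjoint_iff_inter_eq_empty, disjoint_left, mem_image]
  constructor
  · rintro h _ hc ⟨t, ht, rfl⟩
    exact h ⟨t - k, hc, sub_add_cancel t k⟩ ht
  · rintro h _ ⟨c, hc, rfl⟩ ht
    exact h hc ⟨c + k, ht, add_sub_cancel_right c k⟩

theorem two_pow_card_le_two_pow_card_mul_card_filter_powerset_image_add_inter_eq_empty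
    (I T : Finset G) (k : G) :
    2 ^ #I ≤ 2 ^ #T * #{C ∈ I.powerset | C.image (· + k) ∩ T = ∅} := by
  simp_rw [image_add_right_inter_eq_empty_iff]
  calc 2 ^ #I ≤ 2 ^ #(T.image (· - k)) * #{C ∈ I.powerset | Disjoint C (T.image (· - k))} :=
        two_pow_card_le_two_pow_card_mul_card_filter_powerset_disjoint _ _
    _ = 2 ^ #T * _ := by rw [card_image_of_injective _ sub_left_injective]

end Finset

theorem expected_unsupported_offsets_general (n : ℕ) (T : Finset ℤ) :
    ((2 * n + 1 : ℝ) * 2 ^ (2 * n) / 2 ^ T.card : ℝ) ≤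
      ∑ C ∈ (Finset.Icc (1 : ℤ) (2 * n : ℕ)).powerset,
        (((Finset.Icc (0 : ℤ) (2 * n : ℕ)).filter
            (fun k => (C.image (fun c => c + k)) ∩ T = ∅)).card : ℝ) := by
  set I := Icc (1 : ℤ) (2 * n : ℕ)
  set K := Icc (0 : ℤ) (2 * n : ℕ)
  have hI : #I = 2 * n := by simp [I]; omega
  have hK : #K = 2 * n + 1 := by simp [K]; omega
  have hcount : (2 * n + 1) * 2 ^ (2 * n) ≤
      2 ^ #T * ∑ C ∈ I.powerset, #{k ∈ K | C.image (· + k) ∩ T = ∅} := by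
    have hswap : ∑ C ∈ I.powerset, #{k ∈ K | C.image (· + k) ∩ T = ∅} =
        ∑ k ∈ K, #{C ∈ I.powerset | C.image (· + k) ∩ T = ∅} :=
      sum_card_bipartiteAbove_eq_sum_card_bipartiteBelow _
    rw [hswap, mul_sum]
    calc (2 * n + 1) * 2 ^ (2 * n) = ∑ _k ∈ K, 2 ^ #I := by rw [sum_const, hK, hI, smul_eq_mul]
      _ ≤ _ := sum_le_sum fun k _ =>
        two_pow_card_le_two_pow_card_mul_card_filter_powerset_image_add_inter_eq_empty I T k
  rw [div_le_iff₀ (by positivity), mul_comm _ ((2 : ℝ) ^ #T)]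
  exact_mod_cast hcount

/-- **Expectation bound (counting form).** For any finite `T ⊆ ℤ`, the total number, over all
subsets `C ⊆ {1, …, 2n}`, of offsets `k ∈ {0, …, 2n}` at which `C + k` misses `T`, is at
least `(2n+1)·2^(2n)/2^|T|`. -/
theorem expected_unsupported_offsets (n : ℕ) (hn : 1 ≤ n) (T : Finset ℤ) :
    ((2 * n + 1 : ℝ) * 2 ^ (2 * n) / 2 ^ T.card : ℝ) ≤
      ∑ C ∈ (Finset.Icc (1 : ℤ) (2 * n : ℕ)).powerset,
        (((Finset.Icc (0 : ℤ) (2 * n : ℕ)).filter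
            (fun k => (C.image (fun c => c + k)) ∩ T = ∅)).card : ℝ) :=
  expected_unsupported_offsets_general n T
end

section
/- Let m ≥ 0 be an integer, let T ⊆ ℤ be a finite set, and let C, C′ ⊆ ℤ be two sets whose symmetric difference is a single element {i}. Define Y(C) to be the number of offsets k ∈ {0, 1, …, m} with (C + k) ∩ T = ∅, and similarly Y(C′). Then |Y(C) − Y(C′)| ≤ |T|. -/
/-! An offset `k` can change status between `C` and `C'` only through the wheel `i`, so only
if `i + k ∈ T`; hence the offsets counted for exactly one of `C`, `C'` lie in `-i + T`, a set of
size `|T|`, and the two counts differ by at most that. -/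

open scoped symmDiff

namespace Finset

theorem abs_card_sub_card_le_card_symmDiff {α : Type*} [DecidableEq α] (s t : Finset α) :
    |(#s : ℤ) - #t| ≤ #(s ∆ t) := by
  have hst : #s ≤ #(s \ t) + #t := card_le_card_sdiff_add_card
  have hts : #t ≤ #(t \ s) + #s := card_le_card_sdiff_add_card
  have hsplit : #(s ∆ t) = #(s \ t) + #(t \ s) := by
    rw [symmDiff_def, sup_eq_union, card_union_of_disjoint disjoint_sdiff_sdiff]
  rw [abs_sub_le_iff]
  omega

variable {G : Type*} [AddGroup G] [DecidableEq G]

theorem add_mem_of_image_add_inter_eq_empty {C C' T : Finset G} {i k : G} (hC : C' \ C ⊆ {i})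
    (hk : C.image (· + k) ∩ T = ∅) (hk' : C'.image (· + k) ∩ T ≠ ∅) : i + k ∈ T := by
  obtain ⟨_, hx⟩ := nonempty_iff_ne_empty.mpr hk'
  obtain ⟨⟨c, hcC', rfl⟩, hcT⟩ := mem_inter.mp hx |>.imp_left mem_image.mp
  have hcC : c ∉ C := fun hcC =>
    notMem_empty _ (hk ▸ mem_inter.mpr ⟨mem_image_of_mem _ hcC, hcT⟩)
  rwa [mem_singleton.mp (hC (mem_sdiff.mpr ⟨hcC', hcC⟩))] at hcT

theorem filter_image_add_inter_eq_empty_symmDiff_subset {C C' T : Finset G} {i : G}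
    (h : C ∆ C' = {i}) (S : Finset G) :
    S.filter (fun k => C.image (· + k) ∩ T = ∅) ∆ S.filter (fun k => C'.image (· + k) ∩ T = ∅)
      ⊆ T.image (-i + ·) := by
  have hC : C' \ C ⊆ {i} := h ▸ (symmDiff_def C C' ▸ le_sup_right)
  have hC' : C \ C' ⊆ {i} := h ▸ (symmDiff_def C C' ▸ le_sup_left)
  intro k hk
  have hikT : i + k ∈ T := by
    rcases mem_symmDiff.mp hk with ⟨hkA, hkB⟩ | ⟨hkB, hkA⟩
    · rw [mem_filter] at hkA hkB
      exact add_mem_of_image_add_inter_eq_empty hC hkA.2 fun h' => hkB ⟨hkA.1, h'⟩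
    · rw [mem_filter] at hkA hkB
      exact add_mem_of_image_add_inter_eq_empty hC' hkB.2 fun h' => hkA ⟨hkB.1, h'⟩
  exact mem_image.mpr ⟨i + k, hikT, neg_add_cancel_left i k⟩

end Finset

/-- **Lipschitz condition.** If `C` and `C'` differ in a single element `i`, then the number
of offsets `k ∈ {0, …, m}` with `(C + k) ∩ T = ∅` changes by at most `|T|`. -/
theorem unsupported_offsets_lipschitz (m : ℕ) (T : Finset ℤ) (C C' : Finset ℤ) (i : ℤ)
    (h : symmDiff C C' = {i}) :
    |(((Finset.Icc (0 : ℤ) (m : ℤ)).filter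
          (fun k => (C.image (fun c => c + k)) ∩ T = ∅)).card : ℤ) -
      (((Finset.Icc (0 : ℤ) (m : ℤ)).filter
          (fun k => (C'.image (fun c => c + k)) ∩ T = ∅)).card : ℤ)| ≤ (T.card : ℤ) :=
  (Finset.abs_card_sub_card_le_card_symmDiff _ _).trans <| Int.ofNat_le.mpr <|
    (Finset.card_le_card (Finset.filter_image_add_inter_eq_empty_symmDiff_subset h _)).trans
      Finset.card_image_le
end

section
/- Let n ≥ 1, f, ℓ be positive integers with f ≤ ℓ, and let C ⊆ {1, 2, …, f} with |C| = n. Let r = (r₁, …, r_ℓ) be independent random variables, each uniformly distributed on [0, 1]. For each offset k ∈ {0, 1, …, ℓ − f}, let M_k(r) := {s ∈ C + k : r_s = min_{s′ ∈ C + k} r_{s′}} be the set of minimizers of r over C + k, and let T(r) := ⋃_{k=0}^{ℓ−f} M_k(r). Then the expected value of |T(r)| is at most ℓ·(1 + ln n)/n. -/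
open MeasureTheory

/-- The value assigned to pillar position `s ∈ {1, …, ℓ}` by the random vector `ω`. -/
noncomputable def pillarValue (ℓ : ℕ) (ω : Fin ℓ → ℝ) (s : ℤ) : ℝ :=
  if h : 1 ≤ s ∧ s ≤ (ℓ : ℤ) then ω ⟨(s - 1).toNat, by omega⟩ else 0

open scoped Classical in
/-- `M_k(ω)`: the set of positions of `C + k` on which the random value is minimal. -/
noncomputable def minimizers (ℓ : ℕ) (C : Finset ℤ) (k : ℤ) (ω : Fin ℓ → ℝ) : Finset ℤ :=
  (C.image (fun c => c + k)).filter
    (fun s => ∀ t ∈ C.image (fun c => c + k), pillarValue ℓ ω s ≤ pillarValue ℓ ω t)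

/-- The min-hash track `T(ω) = ⋃_{k=0}^{ℓ-f} M_k(ω)`. -/
noncomputable def minHashTrack (ℓ f : ℕ) (C : Finset ℤ) (ω : Fin ℓ → ℝ) : Finset ℤ :=
  (Finset.Icc (0 : ℤ) ((ℓ : ℤ) - (f : ℤ))).biUnion (fun k => minimizers ℓ C k ω)

/-!
A position `s` enters the track only if `r_s < x`, or `r_s ≥ x` and `r_s` is minimal in one of
the at most `n` windows `C + k` containing `s`. By Fubini, the second event has probability
`∫ₓ¹ (1 - v)^(n-1) dv = (1 - x)^n / n` for each window, so
`P(s ∈ T) ≤ x + (1 - x)^n ≤ x + e^(-xn)`. The threshold `x = ln n / n` makes this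
`(1 + ln n)/n`, and summing over the `ℓ` positions bounds the expected size of the track.
-/

open Set
open scoped Finset ENNReal

section PiMinimum

variable {ι : Type*} [Fintype ι] {ν : Measure ℝ} [IsProbabilityMeasure ν]

theorem measure_pi_le_apply_and_forall_apply_le [DecidableEq ι] {i : ι} {S : Finset ι}
    (hiS : i ∉ S) (x : ℝ) :
    Measure.pi (fun _ => ν) {ω | x ≤ ω i ∧ ∀ t ∈ S, ω i ≤ ω t}
      = ∫⁻ v in Ici x, ν (Ici v) ^ #S ∂ν := by
  -- Split `ω` into its coordinates in `S` and the rest (which contain `i`): once the rest is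
  -- fixed, the event is the box `∏_{t ∈ S} [ω i, ∞)`.
  set j : {t // t ∉ S} := ⟨i, hiS⟩
  set F : Set ((S → ℝ) × ({t // t ∉ S} → ℝ)) := {p | x ≤ p.2 j} ∩ ⋂ t, {p | p.2 j ≤ p.1 t}
  have hj : Measurable fun p : (S → ℝ) × ({t // t ∉ S} → ℝ) => p.2 j :=
    (measurable_pi_apply j).comp measurable_snd
  have hFm : MeasurableSet F :=
    (measurableSet_le measurable_const hj).inter
      (.iInter fun t => measurableSet_le hj ((measurable_pi_apply t).comp measurable_fst))
  have hpre : {ω : ι → ℝ | x ≤ ω i ∧ ∀ t ∈ S, ω i ≤ ω t} =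
      MeasurableEquiv.piEquivPiSubtypeProd (fun _ => ℝ) (· ∈ S) ⁻¹' F := by
    ext ω; simp [F, j, MeasurableEquiv.piEquivPiSubtypeProd, Equiv.piEquivPiSubtypeProd]
  have hmeas : Measurable fun v => ν (Ici v) ^ #S :=
    (Antitone.measurable fun _ _ h => measure_mono (Ici_subset_Ici.2 h)).pow_const _
  rw [hpre, (measurePreserving_piEquivPiSubtypeProd _ _).measure_preimage hFm.nullMeasurableSet,
    Measure.prod_apply_symm hFm, ← lintegral_indicator measurableSet_Ici,
    ← (measurePreserving_eval (fun _ => ν) j).lintegral_comp (hmeas.indicator measurableSet_Ici)]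
  refine lintegral_congr fun b => ?_
  by_cases hb : x ≤ b j
  · have : (·, b) ⁻¹' F = Set.pi univ (fun _ : S => Ici (b j)) := by
      ext a; simp [F, hb, Pi.le_def]
    simp only [this, Measure.pi_pi, Finset.prod_const]
    simp [hb]
  · have : (·, b) ⁻¹' F = ∅ := by ext a; simp [F, hb]
    simp [this, hb]

theorem measure_pi_apply_lt (i : ι) (x : ℝ) :
    Measure.pi (fun _ => ν) {ω | ω i < x} = ν (Iio x) :=
  (measurePreserving_eval (fun _ => ν) i).measure_preimage measurableSet_Iio.nullMeasurableSet

end PiMinimum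

instance : IsProbabilityMeasure (volume.restrict (Icc (0 : ℝ) 1)) := ⟨by simp⟩

theorem uniform_Iio_le (x : ℝ) : volume.restrict (Icc (0 : ℝ) 1) (Iio x) ≤ .ofReal x :=
  calc volume.restrict (Icc (0 : ℝ) 1) (Iio x) ≤ volume (Icc 0 x) := by
        rw [Measure.restrict_apply measurableSet_Iio]
        exact measure_mono fun v hv => ⟨hv.2.1, hv.1.le⟩
    _ = .ofReal x := by simp

theorem uniform_Ici_le (v : ℝ) : volume.restrict (Icc (0 : ℝ) 1) (Ici v) ≤ .ofReal (1 - v) :=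
  calc volume.restrict (Icc (0 : ℝ) 1) (Ici v) ≤ volume (Icc v 1) := by
        rw [Measure.restrict_apply measurableSet_Ici]
        exact measure_mono fun w hw => ⟨hw.1, hw.2.2⟩
    _ = .ofReal (1 - v) := Real.volume_Icc

theorem setLIntegral_uniform_Ici_pow_le (m : ℕ) {x : ℝ} (hx0 : 0 ≤ x) (hx1 : x ≤ 1) :
    ∫⁻ v in Ici x, volume.restrict (Icc (0 : ℝ) 1) (Ici v) ^ m ∂volume.restrict (Icc (0 : ℝ) 1)
      ≤ .ofReal ((1 - x) ^ (m + 1) / (m + 1)) :=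
  calc _ ≤ ∫⁻ v in Icc x 1, .ofReal ((1 - v) ^ m) := by
        have hset : Ici x ∩ Icc 0 1 = Icc x 1 := by
          ext v; simp only [mem_inter_iff, mem_Ici, mem_Icc]; grind
        rw [Measure.restrict_restrict measurableSet_Ici, hset]
        refine setLIntegral_mono' measurableSet_Icc fun v hv => ?_
        rw [ENNReal.ofReal_pow (by linarith [hv.2])]
        exact pow_le_pow_left' (uniform_Ici_le v) m
    _ = .ofReal (∫ v in x..1, (1 - v) ^ m) := by
        have hcont : Continuous fun v : ℝ => (1 - v) ^ m := by fun_prop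
        rw [intervalIntegral.integral_of_le hx1, ← integral_Icc_eq_integral_Ioc,
          ofReal_integral_eq_lintegral_ofReal hcont.integrableOn_Icc]
        filter_upwards [ae_restrict_mem measurableSet_Icc] with v hv
        exact pow_nonneg (by linarith [hv.2]) m
    _ = .ofReal ((1 - x) ^ (m + 1) / (m + 1)) := by
        simp [intervalIntegral.integral_comp_sub_left fun v => v ^ m]

theorem one_sub_log_div_pow_le {n : ℕ} (hn : 1 ≤ n) :
    (1 - Real.log n / n) ^ n ≤ 1 / n := by
  have hn' : (0 : ℝ) < n := by exact_mod_cast hn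
  calc (1 - Real.log n / n) ^ n ≤ Real.exp (-Real.log n) :=
        Real.one_sub_div_pow_le_exp_neg (Real.log_le_self hn'.le)
    _ = 1 / n := by rw [Real.exp_neg, Real.exp_log hn', one_div]

theorem integral_card_eq_sum_measureReal {Ω α : Type*} [MeasurableSpace Ω] {μ : Measure Ω}
    [IsFiniteMeasure μ] {T : Ω → Finset α} {U : Finset α} (hTU : ∀ ω, T ω ⊆ U)
    (hT : ∀ a ∈ U, MeasurableSet {ω | a ∈ T ω}) :
    ∫ ω, (#(T ω) : ℝ) ∂μ = ∑ a ∈ U, μ.real {ω | a ∈ T ω} := by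
  classical
  have hcard : ∀ ω, (#(T ω) : ℝ) = ∑ a ∈ U, {ω | a ∈ T ω}.indicator 1 ω := by
    intro ω
    simp [indicator_apply, Finset.inter_eq_right.2 (hTU ω)]
  simp_rw [hcard]
  rw [integral_finsetSum _ fun a ha => (integrable_const 1).indicator (hT a ha)]
  exact Finset.sum_congr rfl fun a ha => integral_indicator_one (hT a ha)

def pillarIndex (ℓ : ℕ) [NeZero ℓ] (s : ℤ) : Fin ℓ := Fin.ofNat ℓ (s - 1).toNat

section Pillars

variable {ℓ : ℕ}

theorem pillarValue_eq_apply_pillarIndex [NeZero ℓ] {s : ℤ} (hs : s ∈ Finset.Icc 1 (ℓ : ℤ))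
    (ω : Fin ℓ → ℝ) : pillarValue ℓ ω s = ω (pillarIndex ℓ s) := by
  rw [Finset.mem_Icc] at hs
  rw [pillarValue, dif_pos hs]
  congr 1
  apply Fin.ext
  rw [pillarIndex, Fin.val_ofNat, Nat.mod_eq_of_lt (by omega)]

theorem pillarIndex_injOn [NeZero ℓ] : InjOn (pillarIndex ℓ) (Finset.Icc 1 (ℓ : ℤ)) := by
  intro s hs t ht hst
  simp only [Finset.coe_Icc, mem_Icc] at hs ht
  have := congrArg Fin.val hst
  simp only [pillarIndex, Fin.val_ofNat] at this
  rw [Nat.mod_eq_of_lt (by omega), Nat.mod_eq_of_lt (by omega)] at this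
  omega

theorem measurable_pillarValue (s : ℤ) : Measurable fun ω : Fin ℓ → ℝ => pillarValue ℓ ω s := by
  unfold pillarValue
  split_ifs
  · exact measurable_pi_apply _
  · exact measurable_const

theorem measure_le_pillarValue_and_forall_le {W : Finset ℤ} (hW : W ⊆ Finset.Icc 1 (ℓ : ℤ))
    {s : ℤ} (hs : s ∈ W) {x : ℝ} (hx0 : 0 ≤ x) (hx1 : x ≤ 1) :
    Measure.pi (fun _ : Fin ℓ => volume.restrict (Icc (0 : ℝ) 1))
        {ω | x ≤ pillarValue ℓ ω s ∧ ∀ t ∈ W, pillarValue ℓ ω s ≤ pillarValue ℓ ω t}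
      ≤ .ofReal ((1 - x) ^ #W / #W) := by
  have : NeZero ℓ := ⟨by have := Finset.mem_Icc.1 (hW hs); omega⟩
  have hinj : InjOn (pillarIndex ℓ) W := pillarIndex_injOn.mono (by exact_mod_cast hW)
  set S := (W.erase s).image (pillarIndex ℓ)
  have hiS : pillarIndex ℓ s ∉ S := by
    simp only [S, Finset.mem_image, Finset.mem_erase]
    rintro ⟨t, ⟨hts, ht⟩, h⟩
    exact hts (hinj ht hs h)
  have hcard : #S + 1 = #W := by
    rw [Finset.card_image_of_injOn (hinj.mono (Finset.erase_subset s W)),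
      Finset.card_erase_add_one hs]
  have hset : {ω | x ≤ pillarValue ℓ ω s ∧ ∀ t ∈ W, pillarValue ℓ ω s ≤ pillarValue ℓ ω t}
      = {ω | x ≤ ω (pillarIndex ℓ s) ∧ ∀ j ∈ S, ω (pillarIndex ℓ s) ≤ ω j} := by
    ext ω
    have hpv : ∀ t ∈ W, pillarValue ℓ ω t = ω (pillarIndex ℓ t) :=
      fun t ht => pillarValue_eq_apply_pillarIndex (hW ht) ω
    simp only [mem_ofPred_eq, hpv s hs, S, Finset.forall_mem_image, Finset.mem_erase]
    refine and_congr_right' ⟨fun h => ?_, fun h => ?_⟩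
    · intro t ht
      exact (h t ht.2).trans_eq (hpv t ht.2)
    · intro t ht
      rcases eq_or_ne t s with rfl | hts
      · exact (hpv t ht).ge
      · exact (h ⟨hts, ht⟩).trans_eq (hpv t ht).symm
  rw [hset, measure_pi_le_apply_and_forall_apply_le hiS, ← hcard]
  exact_mod_cast setLIntegral_uniform_Ici_pow_le #S hx0 hx1

theorem measure_pillarValue_lt_le {s : ℤ} (hs : s ∈ Finset.Icc 1 (ℓ : ℤ)) (x : ℝ) :
    Measure.pi (fun _ : Fin ℓ => volume.restrict (Icc (0 : ℝ) 1))
        {ω | pillarValue ℓ ω s < x} ≤ .ofReal x := by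
  have : NeZero ℓ := ⟨by have := Finset.mem_Icc.1 hs; omega⟩
  simp_rw [pillarValue_eq_apply_pillarIndex hs]
  exact (measure_pi_apply_lt _ x).trans_le (uniform_Iio_le x)

end Pillars

theorem card_filter_mem_image_add_le (C I : Finset ℤ) (s : ℤ) :
    #(I.filter fun k => s ∈ C.image (· + k)) ≤ #C := by
  refine Finset.card_le_card_of_injOn (s - ·) (fun k hk => ?_) fun _ _ _ _ h => by simpa using h
  obtain ⟨c, hc, hck⟩ := Finset.mem_image.1 (Finset.mem_filter.1 hk).2
  simpa [← hck] using hc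

section Track

variable {ℓ f : ℕ} {C : Finset ℤ}

theorem image_add_subset_Icc (hC : C ⊆ Finset.Icc 1 (f : ℤ)) {k : ℤ}
    (hk : k ∈ Finset.Icc 0 ((ℓ : ℤ) - f)) : C.image (· + k) ⊆ Finset.Icc 1 (ℓ : ℤ) := by
  intro s hs
  obtain ⟨c, hc, rfl⟩ := Finset.mem_image.1 hs
  have := Finset.mem_Icc.1 (hC hc)
  rw [Finset.mem_Icc] at hk ⊢
  omega

theorem mem_minHashTrack_iff {ω : Fin ℓ → ℝ} {s : ℤ} :
    s ∈ minHashTrack ℓ f C ω ↔ ∃ k ∈ Finset.Icc 0 ((ℓ : ℤ) - f),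
      s ∈ C.image (· + k) ∧ ∀ t ∈ C.image (· + k), pillarValue ℓ ω s ≤ pillarValue ℓ ω t := by
  simp only [minHashTrack, minimizers, Finset.mem_biUnion, Finset.mem_filter]

theorem minHashTrack_subset_Icc (hC : C ⊆ Finset.Icc 1 (f : ℤ)) (ω : Fin ℓ → ℝ) :
    minHashTrack ℓ f C ω ⊆ Finset.Icc 1 (ℓ : ℤ) := fun _ hs =>
  let ⟨_, hk, hsk, _⟩ := mem_minHashTrack_iff.1 hs
  image_add_subset_Icc hC hk hsk

theorem measurableSet_mem_minHashTrack (s : ℤ) :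
    MeasurableSet {ω : Fin ℓ → ℝ | s ∈ minHashTrack ℓ f C ω} := by
  have : {ω : Fin ℓ → ℝ | s ∈ minHashTrack ℓ f C ω} =
      ⋃ k ∈ Finset.Icc 0 ((ℓ : ℤ) - f), {_ω | s ∈ C.image (· + k)} ∩
        ⋂ t ∈ C.image (· + k), {ω | pillarValue ℓ ω s ≤ pillarValue ℓ ω t} := by
    ext ω
    simp only [mem_ofPred_eq, mem_minHashTrack_iff, mem_iUnion, mem_inter_iff, mem_iInter,
      exists_prop]
  rw [this]
  exact .biUnion (Finset.countable_toSet _) fun k _ => (MeasurableSet.const _).inter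
    (.biInter (Finset.countable_toSet _) fun t _ =>
      measurableSet_le (measurable_pillarValue s) (measurable_pillarValue t))

theorem measure_mem_minHashTrack_le {n : ℕ} (hC : C ⊆ Finset.Icc 1 (f : ℤ)) (hCcard : #C = n)
    (hn : 1 ≤ n) {s : ℤ} (hs : s ∈ Finset.Icc 1 (ℓ : ℤ)) :
    Measure.pi (fun _ : Fin ℓ => volume.restrict (Icc (0 : ℝ) 1))
        {ω | s ∈ minHashTrack ℓ f C ω}
      ≤ .ofReal ((1 + Real.log n) / n) := by
  set μ := Measure.pi (fun _ : Fin ℓ => volume.restrict (Icc (0 : ℝ) 1))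
  have hn' : (0 : ℝ) < n := by exact_mod_cast hn
  set x := Real.log n / n
  have hx0 : 0 ≤ x := div_nonneg (Real.log_nonneg (by exact_mod_cast hn)) hn'.le
  have hx1 : x ≤ 1 := div_le_one_of_le₀ (Real.log_le_self hn'.le) hn'.le
  set K := (Finset.Icc 0 ((ℓ : ℤ) - f)).filter (fun k => s ∈ C.image (· + k))
  set E : ℤ → Set (Fin ℓ → ℝ) := fun k =>
    {ω | x ≤ pillarValue ℓ ω s ∧ ∀ t ∈ C.image (· + k), pillarValue ℓ ω s ≤ pillarValue ℓ ω t}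
  have hcover : {ω | s ∈ minHashTrack ℓ f C ω} ⊆ {ω | pillarValue ℓ ω s < x} ∪ ⋃ k ∈ K, E k := by
    intro ω hω
    obtain ⟨k, hk, hsk, hmin⟩ := mem_minHashTrack_iff.1 hω
    rcases lt_or_ge (pillarValue ℓ ω s) x with hlt | hge
    · exact Or.inl hlt
    · exact Or.inr (mem_biUnion (Finset.mem_filter.2 ⟨hk, hsk⟩) ⟨hge, hmin⟩)
  have hE : ∀ k ∈ K, μ (E k) ≤ .ofReal ((1 - x) ^ n / n) := by
    intro k hk
    obtain ⟨hk, hsk⟩ := Finset.mem_filter.1 hk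
    have hcard : #(C.image (· + k)) = n := by
      rw [Finset.card_image_of_injective _ (add_left_injective k), hCcard]
    have := measure_le_pillarValue_and_forall_le (image_add_subset_Icc hC hk) hsk hx0 hx1
    rwa [hcard] at this
  calc μ {ω | s ∈ minHashTrack ℓ f C ω}
      ≤ μ {ω | pillarValue ℓ ω s < x} + ∑ k ∈ K, μ (E k) :=
        (measure_mono hcover).trans <|
          (measure_union_le _ _).trans (add_le_add_right (measure_biUnion_finset_le _ _) _)
    _ ≤ .ofReal x + n * .ofReal ((1 - x) ^ n / n) := by
        gcongr
        · exact measure_pillarValue_lt_le hs x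
        · refine (Finset.sum_le_card_nsmul _ _ _ hE).trans ?_
          rw [nsmul_eq_mul, ← hCcard]
          gcongr ?_ * _
          exact_mod_cast card_filter_mem_image_add_le C _ s
    _ = .ofReal (x + (1 - x) ^ n) := by
        rw [← ENNReal.ofReal_natCast, ← ENNReal.ofReal_mul hn'.le, mul_div_cancel₀ _ hn'.ne',
          ENNReal.ofReal_add hx0 (pow_nonneg (by linarith) n)]
    _ ≤ .ofReal ((1 + Real.log n) / n) := by
        have := one_sub_log_div_pow_le hn
        gcongr
        rw [add_div, add_comm]
        linarith

end Track

theorem minhash_expected_track_size_general (n f ℓ : ℕ) (C : Finset ℤ) (hC : C ⊆ Finset.Icc 1 (f : ℤ))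
    (hCcard : C.card = n) :
    ∫ ω, ((minHashTrack ℓ f C ω).card : ℝ)
        ∂(Measure.pi (fun _ : Fin ℓ => volume.restrict (Set.Icc (0 : ℝ) 1)))
      ≤ (ℓ : ℝ) * (1 + Real.log n) / n := by
  rcases n.eq_zero_or_pos with rfl | hn
  · obtain rfl : C = ∅ := Finset.card_eq_zero.1 hCcard
    simp [minHashTrack, minimizers, ← Finset.not_nonempty_iff_eq_empty, Finset.biUnion_nonempty]
  rw [integral_card_eq_sum_measureReal (minHashTrack_subset_Icc hC)
    fun s _ => measurableSet_mem_minHashTrack s]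
  calc ∑ s ∈ Finset.Icc 1 (ℓ : ℤ), _
      ≤ ∑ s ∈ Finset.Icc 1 (ℓ : ℤ), (1 + Real.log n) / n :=
        Finset.sum_le_sum fun s hs => ENNReal.toReal_le_of_le_ofReal
          (div_nonneg (by positivity) (Nat.cast_nonneg n))
          (measure_mem_minHashTrack_le hC hCcard hn hs)
    _ = (ℓ : ℝ) * (1 + Real.log n) / n := by
        simp [mul_div_assoc]

/-- **Min-hash expected track size.** With `r₁, …, r_ℓ` i.i.d. uniform on `[0,1]`, the
expected size of the min-hash track is at most `ℓ·(1 + ln n)/n`. -/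
theorem minhash_expected_track_size (n f ℓ : ℕ) (hn : 1 ≤ n) (hf : 0 < f) (hℓ : 0 < ℓ)
    (hfl : f ≤ ℓ) (C : Finset ℤ) (hC : C ⊆ Finset.Icc 1 (f : ℤ)) (hCcard : C.card = n) :
    ∫ ω, ((minHashTrack ℓ f C ω).card : ℝ)
        ∂(Measure.pi (fun _ : Fin ℓ => volume.restrict (Set.Icc (0 : ℝ) 1)))
      ≤ (ℓ : ℝ) * (1 + Real.log n) / n :=
  minhash_expected_track_size_general n f ℓ C hC hCcard
end
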